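/- For words y₁, z₁, …, y_l, z_l, u₁, …, u_l over Σ (separator-free) and any p ∈ ℕ, define the map F(γ) = y₁ · (γ ⊗ (z₁1y₂, z₂1y₃, …, z_{l−1}1y_l)) · z_l on words γ of rank l−1. Then the p-fold iterate of F applied to a word γ of rank l−1 equals y₁ᵖ · (γ ⊗ (z₁ᵖ1y₂ᵖ, …, z_{l−1}ᵖ1y_lᵖ)) · z_lᵖ. In particular, applying the p-fold iterate to γ = u₁1u₂1…1u_l yields y₁ᵖu₁z₁ᵖ 1 y₂ᵖu₂z₂ᵖ 1 … 1 y_lᵖu_lz_lᵖ. -/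

import Mathlib

/-!
Substituting `z'ᵢ 1 y'ᵢ₊₁` into the separators of `zᵢ 1 yᵢ₊₁` gives `zᵢz'ᵢ 1 y'ᵢ₊₁yᵢ₊₁`,
and substitutions compose, so `F_{y',z'} ∘ F_{y,z} = F_{y'y, zz'}` on words of rank `l − 1`.
Hence `F^p = F_{yᵖ, zᵖ}` there, and `F_{y,z}` sends `u₁1…1u_l` to `y₁u₁z₁1…1y_lu_lz_l`.
-/

/-- Words over `Σ₁ = Σ ∪ {1}`: the separator `1` is `none`; the rank of a word
is the number of occurrences of the separator. -/
def rk {α : Type*} (w : List (Option α)) : ℕ := w.countP (·.isNone)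

/-- `icl u j v` is the intercalation `u ⊙_j v`: replace the `j`-th occurrence
(counting from 1) of the separator in `u` by the word `v`. -/
def icl {α : Type*} : List (Option α) → ℕ → List (Option α) → List (Option α)
  | [], _, _ => []
  | none :: t, j, v => if j = 1 then v ++ t else none :: icl t (j - 1) v
  | some a :: t, j, v => some a :: icl t j v

/-- Simultaneous substitution `γ ⊗ (v₁, …, v_m)`: replace the `i`-th occurrence
of the separator in `γ` by the word `vᵢ` (which may itself contain separators). -/
def substG {α : Type*} : List (Option α) → List (List (Option α)) → List (Option α)
  | [], _ => []
  | none :: t, v :: vs => v ++ substG t vs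
  | none :: t, [] => none :: substG t []
  | some a :: t, vs => some a :: substG t vs

/-- `w^p` for a separator-free word `w`. -/
def wpow {α : Type*} (w : List α) (p : ℕ) : List α := (List.replicate p w).flatten

/-- The map `F(γ) = y₁ · (γ ⊗ (z₁1y₂, …, z_{l−1}1y_l)) · z_l` (indices shifted to
`0, …, l−1`). -/
def Fmap {α : Type*} (l : ℕ) (y z : ℕ → List α) (γ : List (Option α)) :
    List (Option α) :=
  (y 0).map some ++
    substG γ ((List.range (l - 1)).map fun i =>
      (z i).map some ++ [none] ++ (y (i + 1)).map some) ++
    (z (l - 1)).map some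

section

variable {α : Type*}

lemma wpow_succ (w : List α) (p : ℕ) : wpow w (p + 1) = w ++ wpow w p := by
  simp [wpow, List.replicate_succ]

lemma wpow_succ' (w : List α) (p : ℕ) : wpow w (p + 1) = wpow w p ++ w := by
  simp [wpow, List.replicate_succ']

@[simp] lemma rk_nil : rk ([] : List (Option α)) = 0 := rfl

@[simp] lemma rk_cons_none (t : List (Option α)) : rk (none :: t) = rk t + 1 := by
  simp [rk]

@[simp] lemma rk_cons_some (a : α) (t : List (Option α)) : rk (some a :: t) = rk t := by
  simp [rk]

@[simp] lemma rk_append (a b : List (Option α)) : rk (a ++ b) = rk a + rk b := by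
  simp [rk, List.countP_append]

@[simp] lemma rk_map_some (w : List α) : rk (w.map some) = 0 := by
  induction w <;> simp_all

@[simp] lemma substG_nil_right : ∀ t : List (Option α), substG t [] = t
  | [] => rfl
  | none :: t => by simp [substG, substG_nil_right t]
  | some a :: t => by simp [substG, substG_nil_right t]

lemma substG_append : ∀ (a b : List (Option α)) (V : List (List (Option α))),
    substG (a ++ b) V = substG a (V.take (rk a)) ++ substG b (V.drop (rk a))
  | [], b, V => by simp [substG]
  | some x :: a, b, V => by simp [substG, substG_append a b V]
  | none :: a, b, [] => by simp
  | none :: a, b, w :: V => by simp [substG, substG_append a b V]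

@[simp] lemma substG_map_some (w : List α) (V : List (List (Option α))) :
    substG (w.map some) V = w.map some := by
  induction w <;> simp_all [substG]

@[simp] lemma substG_map_some_append (w : List α) (t : List (Option α))
    (V : List (List (Option α))) : substG (w.map some ++ t) V = w.map some ++ substG t V := by
  simp [substG_append]

lemma substG_append_map_some : ∀ (t : List (Option α)) (w : List α) (V : List (List (Option α))),
    substG (t ++ w.map some) V = substG t V ++ w.map some
  | [], w, V => by simp [substG]
  | some a :: t, w, V => by simp [substG, substG_append_map_some t w V]
  | none :: t, w, [] => by simp
  | none :: t, w, v :: V => by simp [substG, substG_append_map_some t w V]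

lemma substG_eq_self : ∀ (γ : List (Option α)) (V : List (List (Option α))),
    (∀ v ∈ V, v = [none]) → substG γ V = γ
  | [], _, _ => rfl
  | none :: t, [], _ => by simp
  | none :: t, v :: V, h => by
    obtain rfl := h v List.mem_cons_self
    simp [substG, substG_eq_self t V fun v hv => h v (List.mem_cons_of_mem _ hv)]
  | some a :: t, V, h => by simp [substG, substG_eq_self t V h]

lemma substG_substG : ∀ (γ : List (Option α)) (V W : List (List (Option α))),
    rk γ = V.length → V.length = W.length → (∀ v ∈ V, rk v = 1) →
    substG (substG γ V) W = substG γ (List.zipWith (fun v w => substG v [w]) V W)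
  | [], _, _, _, _, _ => rfl
  | none :: t, [], _, h, _, _ => by simp at h
  | none :: t, _ :: _, [], _, h, _ => by simp at h
  | none :: t, v :: V, w :: W, hγ, hVW, hV => by
    have hv : rk v = 1 := hV v List.mem_cons_self
    simp only [substG, List.zipWith_cons_cons, substG_append, hv, List.take_succ_cons,
      List.take_zero, List.drop_succ_cons, List.drop_zero]
    rw [substG_substG t V W (by simpa using hγ) (by simpa using hVW)
      fun x hx => hV x (List.mem_cons_of_mem _ hx)]
  | some a :: t, V, W, hγ, hVW, hV => by
    simp [substG, substG_substG t V W (by simpa using hγ) hVW hV]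

lemma substG_sep_sep (a b c d : List α) :
    substG (a.map some ++ [none] ++ b.map some) [c.map some ++ [none] ++ d.map some] =
      (a ++ c).map some ++ [none] ++ (d ++ b).map some := by
  simp [substG]

lemma Fmap_Fmap (l : ℕ) (y z y' z' : ℕ → List α) (γ : List (Option α)) (hγ : rk γ = l - 1) :
    Fmap l y' z' (Fmap l y z γ) = Fmap l (fun i => y' i ++ y i) (fun i => z i ++ z' i) γ := by
  unfold Fmap
  rw [substG_append_map_some, substG_map_some_append,
    substG_substG _ _ _ (by simpa using hγ) (by simp) (by simp), List.zipWith_map,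
    List.zipWith_self]
  simp only [substG_sep_sep]
  simp [List.append_assoc]

lemma Fmap_nil (l : ℕ) (γ : List (Option α)) : Fmap l (fun _ => []) (fun _ => []) γ = γ := by
  simp only [Fmap, List.map_nil, List.nil_append, List.append_nil]
  exact substG_eq_self _ _ (by simp)

lemma iterate_Fmap_eq_Fmap_wpow (l : ℕ) (y z : ℕ → List α) (p : ℕ) (γ : List (Option α))
    (hγ : rk γ = l - 1) :
    (Fmap l y z)^[p] γ = Fmap l (fun i => wpow (y i) p) (fun i => wpow (z i) p) γ := by
  induction p with
  | zero => exact (Fmap_nil l γ).symm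
  | succ p ih =>
    rw [Function.iterate_succ_apply', ih, Fmap_Fmap l _ _ _ _ γ hγ]
    simp only [← wpow_succ, ← wpow_succ']

lemma rk_intercalate_map_some (n : ℕ) (u : ℕ → List α) :
    rk (List.intercalate [none] ((List.range (n + 1)).map fun i => (u i).map some)) = n := by
  induction n generalizing u with
  | zero => simp
  | succ n ih =>
    rw [List.range_succ_eq_map, List.map_cons, List.map_map,
      List.intercalate_cons_of_ne_nil (by simp)]
    simpa [Function.comp_def] using ih (fun i => u (i + 1))

lemma Fmap_succ_succ_map_some_append (n : ℕ) (y z : ℕ → List α) (u : List α)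
    (γ : List (Option α)) :
    Fmap (n + 2) y z (u.map some ++ none :: γ) =
      (y 0 ++ u ++ z 0).map some ++ none ::
        Fmap (n + 1) (fun i => y (i + 1)) (fun i => z (i + 1)) γ := by
  simp [Fmap, List.range_succ_eq_map, substG, Function.comp_def]

lemma Fmap_intercalate (n : ℕ) (y z u : ℕ → List α) :
    Fmap (n + 1) y z (List.intercalate [none] ((List.range (n + 1)).map fun i => (u i).map some)) =
      List.intercalate [none] ((List.range (n + 1)).map fun i => (y i ++ u i ++ z i).map some) := by
  induction n generalizing y z u with
  | zero => simp [Fmap]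
  | succ n ih =>
    rw [List.range_succ_eq_map]
    simp only [List.map_cons, List.map_map]
    rw [List.intercalate_cons_of_ne_nil (by simp), List.intercalate_cons_of_ne_nil (by simp)]
    simp only [Function.comp_def, List.append_assoc, List.singleton_append,
      Fmap_succ_succ_map_some_append, ih]

end

/-- the `p`-fold iterate of `F` on a word of rank `l − 1` equals
`y₁ᵖ · (γ ⊗ (z₁ᵖ1y₂ᵖ, …, z_{l−1}ᵖ1y_lᵖ)) · z_lᵖ`; in particular, applied to
`γ = u₁1u₂1…1u_l` it yields `y₁ᵖu₁z₁ᵖ 1 y₂ᵖu₂z₂ᵖ 1 … 1 y_lᵖu_lz_lᵖ`. -/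
theorem iterate_Fmap {α : Type*} (l : ℕ) (hl : 1 ≤ l) (y z u : ℕ → List α)
    (p : ℕ) :
    (∀ γ : List (Option α), rk γ = l - 1 →
      (Fmap l y z)^[p] γ =
        (wpow (y 0) p).map some ++
          substG γ ((List.range (l - 1)).map fun i =>
            (wpow (z i) p).map some ++ [none] ++ (wpow (y (i + 1)) p).map some) ++
          (wpow (z (l - 1)) p).map some) ∧
    (Fmap l y z)^[p]
        (List.intercalate [none] ((List.range l).map fun i => (u i).map some)) =
      List.intercalate [none] ((List.range l).map fun i =>
        (wpow (y i) p).map some ++ (u i).map some ++ (wpow (z i) p).map some) := by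
  obtain ⟨n, rfl⟩ : ∃ n, l = n + 1 := ⟨l - 1, by omega⟩
  refine ⟨iterate_Fmap_eq_Fmap_wpow _ y z p, ?_⟩
  rw [iterate_Fmap_eq_Fmap_wpow _ y z p _ (rk_intercalate_map_some n u), Fmap_intercalate]
  simp
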